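/- Subnormal products do not collide: let γ₁, γ₂ be normal floating-point numbers with exp(γ₁) ≥ exp(γ₂) ≥ e_min + 1, let e₀ be the integer with 2^{e₀} ≤ |γ₁ − γ₂| < 2^{e₀+1}, and set e_θ = max(e_min − M, −e₀ + e_min − M + 1). Then (2^{e_θ} ⊗ γ₁) ⊕ (−(2^{e_θ} ⊗ γ₂)) ≠ 0. (The scaled values 2^{e_θ} ⊗ γ₁ and 2^{e_θ} ⊗ γ₂ remain at least one subnormal ulp apart after rounding.) -/
import Mathlib


namespace FPFmt

/-- Smallest exponent of the format with `E` exponent bits. -/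
def emin (E : ℕ) : ℤ := 2 - 2 ^ (E - 1)

/-- Largest exponent of the format with `E` exponent bits. -/
def emax (E : ℕ) : ℤ := 2 ^ (E - 1) - 1

/-- Finite floating-point numbers with `E`-bit exponent and `(M+1)`-bit
    significand (including subnormals). -/
def Ffin (E M : ℕ) : Set ℝ :=
  {x | ∃ n e : ℤ, emin E ≤ e ∧ e ≤ emax E ∧ |n| < 2 ^ (M + 1) ∧
    x = (n : ℝ) * 2 ^ (e - (M : ℤ))}

/-- Smallest positive float. -/
noncomputable def omega (E M : ℕ) : ℝ := 2 ^ (emin E - (M : ℤ))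

/-- Largest finite float. -/
noncomputable def Omax (E M : ℕ) : ℝ := (2 - 2 ^ (-(M : ℤ))) * 2 ^ (emax E)

/-- Exponent of a finite float (with subnormal clamping). -/
noncomputable def expo (E : ℕ) (x : ℝ) : ℤ := max (Int.log 2 |x|) (emin E)

/-- Significand of a finite float. -/
noncomputable def mant (E : ℕ) (x : ℝ) : ℝ := |x| / 2 ^ (expo E x)

/-- `y` has an even significand in canonical form. -/
def EvenSig (E M : ℕ) (y : ℝ) : Prop :=
  ∃ n e : ℤ, Even n ∧ |n| < 2 ^ (M + 1) ∧ emin E ≤ e ∧ e ≤ emax E ∧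
    ((2 : ℤ) ^ M ≤ |n| ∨ e = emin E) ∧ y = (n : ℝ) * 2 ^ (e - (M : ℤ))

/-- `y` is the result of rounding `x` to nearest (ties to even) onto the
    finite floats of the format. -/
def RoundsTo (E M : ℕ) (x y : ℝ) : Prop :=
  y ∈ Ffin E M ∧ (∀ z ∈ Ffin E M, |y - x| ≤ |z - x|) ∧
    ((∃ z ∈ Ffin E M, z ≠ y ∧ |z - x| = |y - x|) → EvenSig E M y)

open Classical in
noncomputable def rnd (E M : ℕ) (x : ℝ) : ℝ :=
  if h : ∃ y, RoundsTo E M x y then h.choose else 0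

/-- Floating-point addition (round to nearest, ties to even). -/
noncomputable def fadd (E M : ℕ) (x y : ℝ) : ℝ := rnd E M (x + y)

/-- Floating-point multiplication (round to nearest, ties to even). -/
noncomputable def fmul (E M : ℕ) (x y : ℝ) : ℝ := rnd E M (x * y)

/-- Successor float of `x`. -/
noncomputable def fsucc (E M : ℕ) (x : ℝ) : ℝ := sInf {y | y ∈ Ffin E M ∧ x < y}

noncomputable def rint (q : ℝ) : ℤ :=
  if Odd ⌊q + 1/2⌋ ∧ q + 1/2 = (⌊q + 1/2⌋ : ℝ) then ⌊q + 1/2⌋ - 1 else ⌊q + 1/2⌋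

lemma rint_abs_le (q : ℝ) : |(rint q : ℝ) - q| ≤ 1/2 := by
  have h1 := Int.floor_le (q + 1/2)
  have h2 := Int.lt_floor_add_one (q + 1/2)
  unfold rint
  split_ifs with h
  · have ht := h.2
    push_cast
    rw [abs_le]; constructor <;> linarith
  · rw [abs_le]; constructor <;> linarith

lemma rint_eq_floor_of_lt (q : ℝ) (m : ℤ) (h : |(m:ℝ) - q| < 1/2) :
    m = ⌊q + 1/2⌋ ∧ q + 1/2 ≠ (⌊q + 1/2⌋ : ℝ) := by
  have h1 := Int.floor_le (q + 1/2)
  have h2 := Int.lt_floor_add_one (q + 1/2)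
  rw [abs_lt] at h
  have hle : m ≤ ⌊q + 1/2⌋ := Int.le_floor.2 (by linarith)
  have hge : ⌊q + 1/2⌋ ≤ m := by
    have : (⌊q + 1/2⌋ : ℝ) < (m : ℝ) + 1 := by linarith
    exact_mod_cast Int.lt_add_one_iff.mp (by exact_mod_cast this)
  have hmb : m = ⌊q + 1/2⌋ := le_antisymm hle hge
  refine ⟨hmb, fun ht => ?_⟩
  rw [← hmb] at ht
  have : (m:ℝ) - q = 1/2 := by linarith
  rw [this] at h
  linarith [h.2]

lemma rint_nearest (q : ℝ) (m : ℤ) : |(rint q : ℝ) - q| ≤ |(m : ℝ) - q| := by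
  rcases le_or_gt (1/2) |(m:ℝ) - q| with h | h
  · exact (rint_abs_le q).trans h
  · obtain ⟨hmb, hnt⟩ := rint_eq_floor_of_lt q m h
    have : rint q = m := by unfold rint; rw [if_neg (fun hc => hnt hc.2), hmb]
    rw [this]

lemma rint_even_of_tie (q : ℝ) (m : ℤ) (hm : m ≠ rint q)
    (he : |(m:ℝ) - q| = |(rint q : ℝ) - q|) : Even (rint q) := by
  have hle := rint_abs_le q
  have hhalf : |(m:ℝ) - q| = 1/2 := by
    rcases lt_or_eq_of_le (he ▸ hle : |(m:ℝ) - q| ≤ 1/2) with hlt | heq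
    · obtain ⟨hmb, hnt⟩ := rint_eq_floor_of_lt q m hlt
      have : rint q = m := by unfold rint; rw [if_neg (fun hc => hnt hc.2), hmb]
      exact absurd this.symm hm
    · exact heq
  have hrhalf : |(rint q : ℝ) - q| = 1/2 := by rw [← he, hhalf]
  by_cases ht : q + 1/2 = (⌊q + 1/2⌋ : ℝ)
  · unfold rint
    split_ifs with h
    · rcases h.1 with ⟨j, hj⟩
      exact ⟨j, by omega⟩
    · have : ¬ Odd ⌊q + 1/2⌋ := fun ho => h ⟨ho, ht⟩
      exact Int.not_odd_iff_even.mp this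
  · exfalso
    have hrq : rint q = ⌊q + 1/2⌋ := by unfold rint; rw [if_neg (fun hc => ht hc.2)]
    rw [hrq] at hrhalf
    rcases (abs_eq (by norm_num : (0:ℝ) ≤ 1/2)).1 hrhalf with hp | hn
    · exact ht (by linarith)
    · have hq : q + 1/2 = (⌊q + 1/2⌋ : ℝ) + 1 := by linarith
      have hfl : ⌊q + 1/2⌋ = ⌊((⌊q + 1/2⌋ : ℝ) + 1)⌋ := congrArg _ hq
      simp at hfl

/- zpow helpers -/
lemma two_zpow_pos (a : ℤ) : (0:ℝ) < 2 ^ a := zpow_pos two_pos a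
lemma two_zpow_le {a b : ℤ} (h : a ≤ b) : (2:ℝ)^a ≤ 2^b :=
  zpow_le_zpow_right₀ one_le_two h
lemma two_zpow_add_eq {a b c : ℤ} (h : a + b = c) : (2:ℝ)^a * 2^b = 2^c := by
  rw [← zpow_add₀ (two_ne_zero) a b, h]
lemma cast_pow_int (t : ℕ) : (((2:ℤ)^t : ℤ) : ℝ) = (2:ℝ) ^ (t:ℤ) := by
  push_cast
  exact (zpow_natCast 2 t).symm

lemma shift_eq (n e g M' : ℤ) (h : g ≤ e) :
    (n:ℝ) * 2^(e - M') = ((n * 2^(e - g).toNat : ℤ) : ℝ) * 2^(g - M') := by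
  have h1 : ((n * 2^(e - g).toNat : ℤ) : ℝ) = (n:ℝ) * 2^(((e-g).toNat : ℕ):ℤ) := by
    push_cast
    rw [zpow_natCast]
  rw [h1, mul_assoc, two_zpow_add_eq (by omega : (((e-g).toNat : ℕ):ℤ) + (g - M') = e - M')]

lemma mem_Ffin {E M : ℕ} (n e : ℤ) (h1 : emin E ≤ e) (h2 : e ≤ emax E)
    (h3 : |n| < 2^(M+1)) : ((n:ℝ) * 2^(e - (M:ℤ))) ∈ Ffin E M := ⟨n, e, h1, h2, h3, rfl⟩

lemma Ffin_grid {E M : ℕ} {x : ℝ} (h : x ∈ Ffin E M) :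
    ∃ j : ℤ, x = (j:ℝ) * 2^(emin E - (M:ℤ)) := by
  obtain ⟨n, e, he1, he2, hn, rfl⟩ := h
  exact ⟨n * 2^(e - emin E).toNat, shift_eq n e (emin E) M he1⟩

lemma emin_le {E : ℕ} (hE : 5 ≤ E) : emin E ≤ -14 := by
  have h : (16:ℤ) ≤ 2^(E-1) := by
    calc (16:ℤ) = 2^4 := by norm_num
    _ ≤ 2^(E-1) := pow_le_pow_right₀ (by norm_num) (by omega)
  unfold emin; omega

lemma emax_ge {E : ℕ} (hE : 5 ≤ E) : 15 ≤ emax E := by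
  have h : (16:ℤ) ≤ 2^(E-1) := by
    calc (16:ℤ) = 2^4 := by norm_num
    _ ≤ 2^(E-1) := pow_le_pow_right₀ (by norm_num) (by omega)
  unfold emax; omega

lemma emin_add_emax (E : ℕ) : emin E + emax E = 1 := by unfold emin emax; ring



lemma cast_pow_succ (M : ℕ) : (((2:ℤ)^(M+1) : ℤ) : ℝ) = (2:ℝ)^((M:ℤ)+1) := by
  rw [cast_pow_int, show ((M+1:ℕ):ℤ) = (M:ℤ)+1 by omega]

lemma exists_roundsTo (E M : ℕ) (hE : 5 ≤ E) (hM : 1 ≤ M) (x : ℝ)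
    (hx : |x| ≤ 2 ^ (emax E - 1)) :
    ∃ y, RoundsTo E M x y ∧ |y - x| ≤ 2 ^ (expo E x - (M:ℤ)) / 2 := by
  have hem := emin_le hE
  have hex := emax_ge hE
  by_cases hx0 : x = 0
  · refine ⟨0, ⟨⟨0, emin E, le_refl _, by omega, by simpa using pow_pos (by norm_num : (0:ℤ) < 2) (M+1), by simp⟩, ?_, ?_⟩, ?_⟩
    · intro z hz; simp [hx0]
    · rintro ⟨z, hz, hne, habs⟩
      rw [hx0] at habs
      simp at habs
      exact absurd habs hne
    · rw [hx0]
      simp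
      positivity
  · have hxpos : 0 < |x| := abs_pos.2 hx0
    set g := expo E x with hgdef
    have hgemin : emin E ≤ g := le_max_right _ _
    have hlogle : Int.log 2 |x| ≤ g := le_max_left _ _
    have hchoice : g = Int.log 2 |x| ∨ g = emin E := max_choice _ _
    have hxlt : |x| < 2 ^ (g + 1) := by
      have h1 : |x| < (2:ℝ) ^ (Int.log 2 |x| + 1) := by
        exact_mod_cast Int.lt_zpow_succ_log_self one_lt_two |x|
      exact h1.trans_le (two_zpow_le (by omega))
    have hloglee : Int.log 2 |x| ≤ emax E - 1 := by
      have h1 : (2:ℝ) ^ (Int.log 2 |x|) ≤ |x| := by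
        exact_mod_cast Int.zpow_log_le_self one_lt_two hxpos
      exact (zpow_le_zpow_iff_right₀ one_lt_two).1 (h1.trans hx)
    have hglee : g ≤ emax E - 1 := by omega
    have hglb : emin E < g → (2:ℝ) ^ g ≤ |x| := by
      intro h
      rcases hchoice with h1 | h1
      · rw [h1]
        exact_mod_cast Int.zpow_log_le_self one_lt_two hxpos
      · omega
    set u : ℝ := 2 ^ (g - (M:ℤ)) with hudef
    have hu : (0:ℝ) < u := two_zpow_pos _
    set q : ℝ := x / u with hqdef
    have hxqu : x = q * u := (div_mul_cancel₀ x (ne_of_gt hu)).symm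
    set k := rint q with hkdef
    have hdist : ∀ m : ℤ, |(m:ℝ) * u - x| = |(m:ℝ) - q| * u := by
      intro m
      have h1 : (m:ℝ) * u - x = ((m:ℝ) - q) * u := by rw [hxqu]; ring
      rw [h1, abs_mul, abs_of_pos hu]
    have hqabs : |q| < 2 ^ ((M:ℤ) + 1) := by
      rw [hqdef, abs_div, abs_of_pos hu, div_lt_iff₀ hu]
      calc |x| < 2^(g+1) := hxlt
      _ = 2^((M:ℤ)+1) * u := (two_zpow_add_eq (by omega)).symm
    have hk2 : |(k:ℝ) - q| ≤ 1/2 := rint_abs_le q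
    have hkabs : |(k:ℝ)| ≤ |q| + 1/2 := by
      calc |(k:ℝ)| = |((k:ℝ) - q) + q| := by ring_nf
      _ ≤ |(k:ℝ) - q| + |q| := abs_add_le _ _
      _ ≤ 1/2 + |q| := by linarith
      _ = |q| + 1/2 := by ring
    have hkb : |k| ≤ 2 ^ (M + 1) := by
      have h1 : (|k| : ℝ) < ((2^(M+1) : ℤ) : ℝ) + 1 := by
        rw [cast_pow_succ]
        linarith
      have h2 : |k| < 2^(M+1) + 1 := by exact_mod_cast h1
      omega
    have hyerr : |(k:ℝ) * u - x| ≤ u / 2 := by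
      rw [hdist]
      calc |(k:ℝ) - q| * u ≤ (1/2) * u := mul_le_mul_of_nonneg_right hk2 hu.le
      _ = u / 2 := by ring
    have hfar : ∀ z ∈ Ffin E M, (∃ m : ℤ, z = (m:ℝ) * u) ∨
        |(k:ℝ) * u - x| + 2 ^ (emin E - (M:ℤ)) ≤ |z - x| := by
      rintro z ⟨n, e, he1, he2, hn, rfl⟩
      rcases le_or_gt g e with hge | hlt
      · exact Or.inl ⟨n * 2^(e-g).toNat, shift_eq n e g M hge⟩
      right
      have hgleb : (2:ℝ)^g ≤ |x| := hglb (lt_of_le_of_lt he1 hlt)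
      have hzb : |(n:ℝ) * 2^(e - (M:ℤ))| ≤ 2^g - 2^(emin E - (M:ℤ)) := by
        rw [abs_mul, abs_of_pos (two_zpow_pos _)]
        have h1 : |(n:ℝ)| ≤ 2^((M:ℤ)+1) - 1 := by
          have h2 : |n| ≤ 2^(M+1) - 1 := by omega
          have h3 : (|n| : ℝ) ≤ ((2^(M+1) : ℤ) : ℝ) - 1 := by exact_mod_cast h2
          rw [cast_pow_succ] at h3
          exact h3
        calc |(n:ℝ)| * 2^(e-(M:ℤ)) ≤ (2^((M:ℤ)+1) - 1) * 2^(e-(M:ℤ)) :=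
              mul_le_mul_of_nonneg_right h1 (two_zpow_pos _).le
        _ = 2^(e+1) - 2^(e - (M:ℤ)) := by
              rw [sub_mul, one_mul, two_zpow_add_eq (by omega : (M:ℤ)+1 + (e - (M:ℤ)) = e+1)]
        _ ≤ 2^g - 2^(emin E - (M:ℤ)) := by
              have hA := two_zpow_le (by omega : e + 1 ≤ g)
              have hB := two_zpow_le (by omega : emin E - (M:ℤ) ≤ e - (M:ℤ))
              linarith
      have hyb : |(k:ℝ) * u - x| ≤ |x| - 2^g := by
        rcases le_or_gt 0 x with hxs | hxs
        · have habs : |x| = x := abs_of_nonneg hxs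
          have h1 := rint_nearest q (2^M)
          have h2 : ((2^M : ℤ):ℝ) * u = 2^g := by
            rw [cast_pow_int]
            exact two_zpow_add_eq (by omega)
          calc |(k:ℝ) * u - x| = |(k:ℝ) - q| * u := hdist k
          _ ≤ |((2^M:ℤ):ℝ) - q| * u := mul_le_mul_of_nonneg_right h1 hu.le
          _ = |((2^M:ℤ):ℝ) * u - x| := (hdist _).symm
          _ = |2^g - x| := by rw [h2]
          _ = x - 2^g := by rw [abs_of_nonpos (by rw [habs] at hgleb; linarith)]; ring
          _ = |x| - 2^g := by rw [habs]
        · have habs : |x| = -x := abs_of_neg hxs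
          have h1 := rint_nearest q (-(2^M))
          have h2 : ((-(2^M) : ℤ):ℝ) * u = -(2^g) := by
            have h3 : (2:ℝ)^((M:ℕ):ℤ) * u = 2^g := two_zpow_add_eq (by omega)
            push_cast
            rw [← zpow_natCast (2:ℝ) M, neg_mul, h3]
          have hgleb' : (2:ℝ)^g ≤ -x := by rw [habs] at hgleb; exact hgleb
          calc |(k:ℝ) * u - x| = |(k:ℝ) - q| * u := hdist k
          _ ≤ |((-(2^M):ℤ):ℝ) - q| * u := mul_le_mul_of_nonneg_right h1 hu.le
          _ = |((-(2^M):ℤ):ℝ) * u - x| := (hdist _).symm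
          _ = |-(2^g) - x| := by rw [h2]
          _ = -(2^g) - x := by rw [abs_of_nonneg (by linarith)]
          _ = |x| - 2^g := by rw [habs]; ring
      have hzx : |x| - (2^g - 2^(emin E - (M:ℤ))) ≤ |(n:ℝ) * 2^(e - (M:ℤ)) - x| := by
        have h1 := abs_sub_abs_le_abs_sub x ((n:ℝ) * 2^(e - (M:ℤ)))
        rw [abs_sub_comm] at h1
        linarith
      linarith
    have hnear : ∀ z ∈ Ffin E M, |(k:ℝ) * u - x| ≤ |z - x| := by
      intro z hz
      rcases hfar z hz with ⟨m, rfl⟩ | hfar2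
      · rw [hdist m, hdist k]
        exact mul_le_mul_of_nonneg_right (rint_nearest q m) hu.le
      · have := two_zpow_pos (emin E - (M:ℤ))
        linarith
    have hkcase : |k| < 2^(M+1) ∨ |k| = 2^(M+1) := lt_or_eq_of_le hkb
    have h2M1 : Even ((2:ℤ)^M) := Int.even_pow.2 ⟨even_two, by omega⟩
    have habs2M : |(2:ℤ)^M| < 2^(M+1) := by
      rw [abs_of_nonneg (by positivity)]
      exact pow_lt_pow_right₀ (by norm_num) (by omega)
    have hupos : ((2^(M+1) : ℤ):ℝ) * u = ((2^M : ℤ):ℝ) * 2^((g+1) - (M:ℤ)) := by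
      rw [cast_pow_succ, cast_pow_int, two_zpow_add_eq (by omega : (M:ℤ)+1 + (g - (M:ℤ)) = g+1),
        two_zpow_add_eq (by omega : ((M:ℕ):ℤ) + (g+1 - (M:ℤ)) = g+1)]
    have huneg : ((-(2^(M+1)) : ℤ):ℝ) * u = ((-(2^M) : ℤ):ℝ) * 2^((g+1) - (M:ℤ)) := by
      push_cast
      push_cast at hupos
      linarith [hupos]
    have hmem : (k:ℝ) * u ∈ Ffin E M := by
      rcases hkcase with h | h
      · exact mem_Ffin k g hgemin (by omega) h
      · rcases (abs_eq (by positivity)).1 h with hk1 | hk1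
        · rw [hk1, hupos]
          exact mem_Ffin (2^M) (g+1) (by omega) (by omega) habs2M
        · rw [hk1, huneg]
          exact mem_Ffin (-(2^M)) (g+1) (by omega) (by omega) (by rw [abs_neg]; exact habs2M)
    have heven : (∃ z ∈ Ffin E M, z ≠ (k:ℝ)*u ∧ |z - x| = |(k:ℝ)*u - x|) → EvenSig E M ((k:ℝ)*u) := by
      rintro ⟨z, hz, hne, habs⟩
      have hkeven : Even k := by
        rcases hfar z hz with ⟨m, rfl⟩ | hfar2
        · have hmk : m ≠ k := fun hc => hne (by rw [hc])
          apply rint_even_of_tie q m hmk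
          rw [hdist m, hdist k] at habs
          exact mul_right_cancel₀ (ne_of_gt hu) habs
        · exfalso
          have := two_zpow_pos (emin E - (M:ℤ))
          linarith
      rcases hkcase with h | h
      · refine ⟨k, g, hkeven, h, hgemin, by omega, ?_, rfl⟩
        rcases lt_or_eq_of_le hgemin with hgt | hgeq
        · left
          have h2 : (2:ℝ)^g ≤ |x| := hglb hgt
          have hq2 : (2:ℝ)^(M:ℤ) ≤ |q| := by
            rw [hqdef, abs_div, abs_of_pos hu, le_div_iff₀ hu]
            calc (2:ℝ)^(M:ℤ) * u = 2^g := two_zpow_add_eq (by omega)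
            _ ≤ |x| := h2
          have h3 : (2:ℝ)^(M:ℤ) - 1/2 ≤ |(k:ℝ)| := by
            have h4 : |q| - |(k:ℝ)| ≤ |q - (k:ℝ)| := abs_sub_abs_le_abs_sub _ _
            rw [abs_sub_comm] at h4
            linarith
          have h5 : ((2^M : ℤ):ℝ) - 1 < (|k| : ℝ) := by
            rw [cast_pow_int]
            linarith
          have h6 : (2:ℤ)^M - 1 < |k| := by exact_mod_cast h5
          omega
        · exact Or.inr hgeq.symm
      · rcases (abs_eq (by positivity)).1 h with hk1 | hk1
        · rw [hk1, hupos]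
          exact ⟨2^M, g+1, h2M1, habs2M, by omega, by omega,
            Or.inl (le_of_eq (abs_of_nonneg (by positivity)).symm), rfl⟩
        · rw [hk1, huneg]
          exact ⟨-(2^M), g+1, h2M1.neg, by rw [abs_neg]; exact habs2M, by omega, by omega,
            Or.inl (by rw [abs_neg, abs_of_nonneg (by positivity : (0:ℤ) ≤ 2^M)]), rfl⟩
    exact ⟨(k:ℝ) * u, ⟨hmem, hnear, heven⟩, hyerr⟩




lemma rnd_roundsTo {E M : ℕ} {x : ℝ} (h : ∃ y, RoundsTo E M x y) :
    RoundsTo E M x (rnd E M x) := by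
  rw [rnd, dif_pos h]
  exact h.choose_spec

lemma roundsTo_self {E M : ℕ} {x : ℝ} (h : x ∈ Ffin E M) : RoundsTo E M x x := by
  refine ⟨h, fun z _ => by simp, ?_⟩
  rintro ⟨z, _, hne, habs⟩
  rw [sub_self, abs_zero, abs_eq_zero, sub_eq_zero] at habs
  exact absurd habs hne

lemma rnd_eq_self {E M : ℕ} {x : ℝ} (h : x ∈ Ffin E M) : rnd E M x = x := by
  have hr := rnd_roundsTo ⟨x, roundsTo_self h⟩
  have h2 := hr.2.1 x h
  rw [sub_self, abs_zero] at h2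
  have h3 : |rnd E M x - x| = 0 := le_antisymm h2 (abs_nonneg _)
  rw [abs_eq_zero, sub_eq_zero] at h3
  exact h3

lemma rnd_err (E M : ℕ) (hE : 5 ≤ E) (hM : 1 ≤ M) (x : ℝ)
    (hx : |x| ≤ 2 ^ (emax E - 1)) :
    |rnd E M x - x| ≤ 2 ^ (expo E x - (M:ℤ)) / 2 := by
  obtain ⟨y, hy, hb⟩ := exists_roundsTo E M hE hM x hx
  have hr := rnd_roundsTo ⟨y, hy⟩
  exact (hr.2.1 y hy.1).trans hb

lemma canonical {E M : ℕ} {x : ℝ} (h : x ∈ Ffin E M) (hx : (2:ℝ)^(emin E) ≤ |x|) :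
    ∃ n : ℤ, x = (n:ℝ) * 2^(expo E x - (M:ℤ)) ∧ (2:ℝ)^(expo E x) ≤ |x| ∧
      expo E x ≤ emax E ∧ |n| < 2^(M+1) ∧ |x| < 2^(expo E x + 1) := by
  have hxpos : 0 < |x| := lt_of_lt_of_le (two_zpow_pos _) hx
  have hlogge : emin E ≤ Int.log 2 |x| :=
    (Int.zpow_le_iff_le_log one_lt_two hxpos).1 (by exact_mod_cast hx)
  have hexpo : expo E x = Int.log 2 |x| := max_eq_left hlogge
  have hglb : (2:ℝ)^(expo E x) ≤ |x| := by
    rw [hexpo]; exact_mod_cast Int.zpow_log_le_self one_lt_two hxpos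
  have hgub : |x| < 2^(expo E x + 1) := by
    rw [hexpo]; exact_mod_cast Int.lt_zpow_succ_log_self one_lt_two |x|
  obtain ⟨n₀, e₀, he1, he2, hn, hxe⟩ := h
  have hn₀R : |(n₀:ℝ)| < 2^((M:ℤ)+1) := by
    have h3 : (|n₀| : ℝ) < ((2^(M+1) : ℤ) : ℝ) := by exact_mod_cast hn
    rw [cast_pow_succ] at h3
    exact h3
  have hxlt : |x| < 2 ^ (e₀ + 1) := by
    rw [hxe, abs_mul, abs_of_pos (two_zpow_pos _)]
    calc |(n₀:ℝ)| * 2^(e₀-(M:ℤ)) < 2^((M:ℤ)+1) * 2^(e₀-(M:ℤ)) :=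
          mul_lt_mul_of_pos_right hn₀R (two_zpow_pos _)
    _ = 2^(e₀+1) := two_zpow_add_eq (by omega)
  have hloge : expo E x ≤ e₀ := by
    rw [hexpo]
    have := (Int.lt_zpow_iff_log_lt one_lt_two hxpos).1
      (by exact_mod_cast hxlt : |x| < ((2:ℕ):ℝ) ^ (e₀+1))
    omega
  set n : ℤ := n₀ * 2^((e₀ - expo E x).toNat) with hndef
  have hxeq : x = (n:ℝ) * 2^(expo E x - (M:ℤ)) := by
    conv_lhs => rw [hxe]
    exact shift_eq n₀ e₀ (expo E x) (M:ℤ) hloge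
  have hnb : |n| < 2^(M+1) := by
    have habs : |x| = |(n:ℝ)| * 2^(expo E x - (M:ℤ)) := by
      conv_lhs => rw [hxeq]
      rw [abs_mul, abs_of_pos (two_zpow_pos _)]
    have h1 : (2:ℝ)^(expo E x + 1) = 2^((M:ℤ)+1) * 2^(expo E x - (M:ℤ)) :=
      (two_zpow_add_eq (by omega)).symm
    have h2 : |(n:ℝ)| * 2^(expo E x - (M:ℤ)) < 2^((M:ℤ)+1) * 2^(expo E x - (M:ℤ)) := by
      rw [← habs, ← h1]; exact hgub
    have h3 := lt_of_mul_lt_mul_right h2 (two_zpow_pos (expo E x - (M:ℤ))).le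
    have h4 : (|n| : ℝ) < ((2^(M+1) : ℤ) : ℝ) := by rw [cast_pow_succ]; exact_mod_cast h3
    exact_mod_cast h4
  exact ⟨n, hxeq, hglb, le_trans hloge he2, hnb, hgub⟩

lemma scale_err (E M : ℕ) (hE : 5 ≤ E) (hM : 1 ≤ M) (γ : ℝ) (h : γ ∈ Ffin E M)
    (hn : (2:ℝ)^(emin E) ≤ |γ|) (eθ : ℤ) (hθ : eθ ≤ 0) :
    |rnd E M ((2:ℝ)^eθ * γ) - (2:ℝ)^eθ * γ| ≤ 2^(emin E - (M:ℤ)) / 2 := by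
  have hem := emin_le hE
  have hex := emax_ge hE
  obtain ⟨n, hrep, hge, hle, hnlt, hgub⟩ := canonical h hn
  have hp : (2:ℝ)^eθ * γ = (n:ℝ) * 2^(expo E γ + eθ - (M:ℤ)) := by
    conv_lhs => rw [hrep]
    rw [mul_left_comm, two_zpow_add_eq (by omega : eθ + (expo E γ - (M:ℤ)) = expo E γ + eθ - (M:ℤ))]
  rcases le_or_gt (emin E) (expo E γ + eθ) with hc | hc
  · have hmem : (2:ℝ)^eθ * γ ∈ Ffin E M := by
      rw [hp]; exact mem_Ffin n (expo E γ + eθ) hc (by omega) hnlt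
    rw [rnd_eq_self hmem, sub_self, abs_zero]
    positivity
  · have hγpos : 0 < |γ| := lt_of_lt_of_le (two_zpow_pos _) hn
    have hγne : γ ≠ 0 := abs_pos.1 hγpos
    have hplt : |(2:ℝ)^eθ * γ| < 2^(emin E) := by
      rw [abs_mul, abs_of_pos (two_zpow_pos _)]
      calc (2:ℝ)^eθ * |γ| < 2^eθ * 2^(expo E γ + 1) :=
            mul_lt_mul_of_pos_left hgub (two_zpow_pos _)
      _ = 2^(eθ + (expo E γ + 1)) := two_zpow_add_eq rfl
      _ ≤ 2^(emin E) := two_zpow_le (by omega)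
    have hpne : (2:ℝ)^eθ * γ ≠ 0 := mul_ne_zero (ne_of_gt (two_zpow_pos _)) hγne
    have hexpo : expo E ((2:ℝ)^eθ * γ) = emin E := by
      apply max_eq_right
      have := (Int.lt_zpow_iff_log_lt one_lt_two (abs_pos.2 hpne)).1
        (by exact_mod_cast hplt : |(2:ℝ)^eθ * γ| < ((2:ℕ):ℝ) ^ (emin E))
      omega
    have herr := rnd_err E M hE hM ((2:ℝ)^eθ * γ)
      (le_trans hplt.le (two_zpow_le (by omega)))
    rw [hexpo] at herr
    exact herr




/-- subnormal products of sufficiently distinct normal floats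
do not collide after scaling by `2^{e_θ}`. -/
theorem subnormal_products_do_not_collide (E M : ℕ)
    (hE : 5 ≤ E) (hM : 3 ≤ M) (hME : (M : ℤ) ≤ 2 ^ (E - 1))
    (γ₁ γ₂ : ℝ) (h1 : γ₁ ∈ Ffin E M) (h2 : γ₂ ∈ Ffin E M)
    (hn1 : (2 : ℝ) ^ (emin E) ≤ |γ₁|) (hn2 : (2 : ℝ) ^ (emin E) ≤ |γ₂|)
    (hord : expo E γ₂ ≤ expo E γ₁) (hlow : emin E + 1 ≤ expo E γ₂)
    (e₀ : ℤ)
    (he₀ : (2 : ℝ) ^ e₀ ≤ |γ₁ - γ₂| ∧ |γ₁ - γ₂| < 2 ^ (e₀ + 1))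
    (eθ : ℤ) (heθ : eθ = max (emin E - M) (-e₀ + emin E - M + 1)) :
    fadd E M (fmul E M (2 ^ eθ) γ₁) (-(fmul E M (2 ^ eθ) γ₂)) ≠ 0 := by
  have hem := emin_le hE
  have hex := emax_ge hE
  have hM1 : 1 ≤ M := by omega
  show rnd E M (rnd E M ((2:ℝ)^eθ * γ₁) + -(rnd E M ((2:ℝ)^eθ * γ₂))) ≠ 0
  obtain ⟨n₁, hrep₁, hge₁, hle₁, hnlt₁, hgub₁⟩ := canonical h1 hn1
  obtain ⟨n₂, hrep₂, hge₂, hle₂, hnlt₂, hgub₂⟩ := canonical h2 hn2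
  set ω : ℝ := 2^(emin E - (M:ℤ)) with hω
  have hωpos : 0 < ω := two_zpow_pos _
  -- γ₁ - γ₂ is a nonzero multiple of 2^(g₂ - M)
  have hd : γ₁ - γ₂ = ((n₁ * 2^((expo E γ₁ - expo E γ₂).toNat) - n₂ : ℤ):ℝ)
      * 2^(expo E γ₂ - (M:ℤ)) := by
    conv_lhs => rw [hrep₁, hrep₂]
    rw [shift_eq n₁ (expo E γ₁) (expo E γ₂) (M:ℤ) hord]
    push_cast
    ring
  have hdiffpos : (0:ℝ) < |γ₁ - γ₂| := lt_of_lt_of_le (two_zpow_pos e₀) he₀.1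
  have hdne : (n₁ * 2^((expo E γ₁ - expo E γ₂).toNat) - n₂ : ℤ) ≠ 0 := by
    intro h0
    rw [h0] at hd
    simp at hd
    rw [hd] at hdiffpos
    simp at hdiffpos
  have hdlb : (2:ℝ)^(expo E γ₂ - (M:ℤ)) ≤ |γ₁ - γ₂| := by
    rw [hd, abs_mul, abs_of_pos (two_zpow_pos _)]
    have h1 : (1:ℝ) ≤ |((n₁ * 2^((expo E γ₁ - expo E γ₂).toNat) - n₂ : ℤ):ℝ)| := by
      exact_mod_cast Int.one_le_abs hdne
    nlinarith [two_zpow_pos (expo E γ₂ - (M:ℤ))]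
  have he₀lb : emin E + 1 - (M:ℤ) ≤ e₀ := by
    have h1 : (2:ℝ)^(emin E + 1 - (M:ℤ)) ≤ 2^(expo E γ₂ - (M:ℤ)) := two_zpow_le (by omega)
    have h2 := lt_of_le_of_lt (h1.trans hdlb) he₀.2
    have h3 := (zpow_lt_zpow_iff_right₀ one_lt_two).1 h2
    omega
  have he₀ub : e₀ ≤ emax E + 1 := by
    have hub1 : |γ₁| < 2^(emax E + 1) := lt_of_lt_of_le hgub₁ (two_zpow_le (by omega))
    have hub2 : |γ₂| < 2^(emax E + 1) := lt_of_lt_of_le hgub₂ (two_zpow_le (by omega))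
    have h0 : |γ₁ - γ₂| ≤ |γ₁| + |γ₂| := by
      have t := abs_add_le γ₁ (-γ₂)
      rw [← sub_eq_add_neg, abs_neg] at t
      exact t
    have hdb : (2:ℝ)^(emax E + 2) = 2^(emax E + 1) + 2^(emax E +1) := by
      have := two_zpow_add_eq (show (1:ℤ) + (emax E + 1) = emax E + 2 by ring)
      rw [← this]
      norm_num
      ring
    have h2 : (2:ℝ)^e₀ < 2^(emax E + 2) := by
      calc (2:ℝ)^e₀ ≤ |γ₁ - γ₂| := he₀.1
      _ ≤ |γ₁| + |γ₂| := h0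
      _ < 2^(emax E + 1) + 2^(emax E + 1) := by linarith
      _ = 2^(emax E + 2) := hdb.symm
    have h3 := (zpow_lt_zpow_iff_right₀ one_lt_two).1 h2
    omega
  have hθle : eθ ≤ 0 := by rw [heθ]; apply max_le <;> omega
  have hθ2 : emin E - (M:ℤ) + 1 ≤ eθ + e₀ := by
    have := le_max_right (emin E - (M:ℤ)) (-e₀ + emin E - (M:ℤ) + 1)
    omega
  have hse := emin_add_emax E
  have hθ3 : eθ + e₀ ≤ 2 - (M:ℤ) := by
    rcases max_cases (emin E - (M:ℤ)) (-e₀ + emin E - (M:ℤ) + 1) with ⟨hv, _⟩ | ⟨hv, _⟩ <;> omega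
  have herr₁ := scale_err E M hE hM1 γ₁ h1 hn1 eθ hθle
  have herr₂ := scale_err E M hE hM1 γ₂ h2 hn2 eθ hθle
  set a₁ := rnd E M ((2:ℝ)^eθ * γ₁) with ha₁
  set a₂ := rnd E M ((2:ℝ)^eθ * γ₂) with ha₂
  set s := a₁ + -a₂ with hs
  have hpd : (2:ℝ)^eθ * γ₁ - (2:ℝ)^eθ * γ₂ = (2:ℝ)^eθ * (γ₁ - γ₂) := by ring
  have hpdlb : (2:ℝ)^(eθ + e₀) ≤ |(2:ℝ)^eθ * γ₁ - (2:ℝ)^eθ * γ₂| := by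
    rw [hpd, abs_mul, abs_of_pos (two_zpow_pos _)]
    calc (2:ℝ)^(eθ+e₀) = 2^eθ * 2^e₀ := (two_zpow_add_eq rfl).symm
    _ ≤ 2^eθ * |γ₁ - γ₂| := mul_le_mul_of_nonneg_left he₀.1 (two_zpow_pos _).le
  have hpdub : |(2:ℝ)^eθ * γ₁ - (2:ℝ)^eθ * γ₂| < 2^(eθ + e₀ + 1) := by
    rw [hpd, abs_mul, abs_of_pos (two_zpow_pos _)]
    calc (2:ℝ)^eθ * |γ₁ - γ₂| < 2^eθ * 2^(e₀+1) :=
          mul_lt_mul_of_pos_left he₀.2 (two_zpow_pos _)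
    _ = 2^(eθ+e₀+1) := two_zpow_add_eq (by ring)
  have h2ω : ω * 2 = (2:ℝ)^(emin E - (M:ℤ) + 1) := by
    rw [hω, ← two_zpow_add_eq (rfl : (emin E - (M:ℤ)) + 1 = emin E - (M:ℤ) + 1)]
    norm_num
  have hslb : ω ≤ |s| := by
    have hA : (2:ℝ)^eθ*γ₁ - (2:ℝ)^eθ*γ₂
        = s + (((2:ℝ)^eθ*γ₁ - a₁) + (a₂ - (2:ℝ)^eθ*γ₂)) := by rw [hs]; ring
    have htri : |(2:ℝ)^eθ*γ₁ - (2:ℝ)^eθ*γ₂|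
        ≤ |s| + (|(2:ℝ)^eθ*γ₁ - a₁| + |a₂ - (2:ℝ)^eθ*γ₂|) := by
      rw [hA]
      have t1 := abs_add_le s (((2:ℝ)^eθ*γ₁ - a₁) + (a₂ - (2:ℝ)^eθ*γ₂))
      have t2 := abs_add_le ((2:ℝ)^eθ*γ₁ - a₁) (a₂ - (2:ℝ)^eθ*γ₂)
      linarith
    have e1 : |(2:ℝ)^eθ*γ₁ - a₁| = |a₁ - (2:ℝ)^eθ*γ₁| := abs_sub_comm _ _
    have e2 : |a₂ - (2:ℝ)^eθ*γ₂| = |a₂ - (2:ℝ)^eθ*γ₂| := rfl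
    have hmono := two_zpow_le hθ2
    linarith [hpdlb, herr₁, herr₂]
  have hsub : |s| ≤ 2^(emax E - 1) := by
    have hB : s = ((2:ℝ)^eθ*γ₁ - (2:ℝ)^eθ*γ₂)
        + ((a₁ - (2:ℝ)^eθ*γ₁) - (a₂ - (2:ℝ)^eθ*γ₂)) := by rw [hs]; ring
    have htri2 : |s| ≤ |(2:ℝ)^eθ*γ₁ - (2:ℝ)^eθ*γ₂|
        + (|a₁ - (2:ℝ)^eθ*γ₁| + |a₂ - (2:ℝ)^eθ*γ₂|) := by
      rw [hB]
      have t1 := abs_add_le ((2:ℝ)^eθ*γ₁ - (2:ℝ)^eθ*γ₂)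
        ((a₁ - (2:ℝ)^eθ*γ₁) - (a₂ - (2:ℝ)^eθ*γ₂))
      have t2 := abs_add_le (a₁ - (2:ℝ)^eθ*γ₁) (-(a₂ - (2:ℝ)^eθ*γ₂))
      rw [← sub_eq_add_neg, abs_neg] at t2
      linarith
    have hω1 : ω ≤ 1 := by
      rw [hω]
      calc (2:ℝ)^(emin E - (M:ℤ)) ≤ 2^(0:ℤ) := two_zpow_le (by omega)
      _ = 1 := zpow_zero 2
    have h4 : (2:ℝ)^(eθ+e₀+1) ≤ 2^(2:ℤ) := two_zpow_le (by omega)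
    have h5 : (2:ℝ)^(2:ℤ) = 4 := by norm_num
    have h6 : (16:ℝ) ≤ 2^(emax E - 1) := by
      calc (16:ℝ) = 2^(4:ℤ) := by norm_num
      _ ≤ 2^(emax E - 1) := two_zpow_le (by omega)
    linarith [htri2, hpdub, herr₁, herr₂]
  obtain ⟨y, hy, _⟩ := exists_roundsTo E M hE hM1 s hsub
  have hr := rnd_roundsTo ⟨y, hy⟩
  intro h0
  rw [h0] at hr
  have hsne : s ≠ 0 := by
    intro hc
    rw [hc] at hslb
    simp at hslb
    linarith
  rcases le_or_gt 0 s with hpos | hneg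
  · have habs : |s| = s := abs_of_nonneg hpos
    have hωs : ω ≤ s := by rw [habs] at hslb; exact hslb
    have hzmem : ω ∈ Ffin E M := by
      have := mem_Ffin (E := E) (M := M) 1 (emin E) le_rfl (by omega)
        (by simpa using pow_lt_pow_right₀ (by norm_num : (1:ℤ) < 2) (by omega : 0 < M+1))
      simpa using this
    have h2 := hr.2.1 ω hzmem
    rw [zero_sub, abs_neg] at h2
    have habs2 : |ω - s| = s - ω := by
      rw [abs_of_nonpos (by linarith)]; ring
    rw [habs, habs2] at h2
    linarith
  · have habs : |s| = -s := abs_of_neg hneg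
    have hωs : ω ≤ -s := by rw [habs] at hslb; exact hslb
    have hzmem : -ω ∈ Ffin E M := by
      have := mem_Ffin (E := E) (M := M) (-1) (emin E) le_rfl (by omega)
        (by simpa using pow_lt_pow_right₀ (by norm_num : (1:ℤ) < 2) (by omega : 0 < M+1))
      simpa using this
    have h2 := hr.2.1 (-ω) hzmem
    rw [zero_sub, abs_neg] at h2
    have habs2 : |-ω - s| = -s - ω := by
      rw [abs_of_nonneg (by linarith)]; ring
    rw [habs, habs2] at h2
    linarith


end FPFmt
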